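/- arXiv:1510.01675 — 3 statements merged into one kernel-verified Lean document; each statement's English description precedes it below -/
import Mathlib

section
/- Let ν be a class (iii) probability measure on [0,∞) with bounded continuous density f(x)=exp(−φ(x)) satisfying lim_{x→∞} φ(x)/log(x) = c with c>1, and let η be another probability measure with density g(x)=exp(−γ(x)). Suppose the limit lim_{x→∞} φ(x)/γ(x) exists and that g(x)/f(x) is bounded on every compact interval. Fix α>1. If lim_{x→∞} γ(x)/φ(x) > (α−1)/α + 1/(cα) then D^α(η|ν) < ∞, and if lim_{x→∞} γ(x)/φ(x) < (α−1)/α + 1/(cα) then D^α(η|ν) = ∞. -/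
open Filter MeasureTheory Set
open scoped ENNReal Topology

noncomputable section

/-- The `F`-divergence `D_F(η|ν)` between a reference density `f` and an
alternative density `g` on `(0,∞)` (the value `⊤` encodes an infinite divergence). -/
def Ddiv (F f g : ℝ → ℝ) : ℝ≥0∞ :=
  ∫⁻ x in Set.Ioi (0 : ℝ), ENNReal.ofReal (F (g x / f x) * f x)

/-- Generator of the polynomial (α-) divergence: `F(y) = (y^α - 1)/(α(α-1))`. -/
def Falpha (α : ℝ) : ℝ → ℝ := fun y => (y ^ α - 1) / (α * (α - 1))

/-- Class (i): the log-density grows at least linearly, `lim φ(x)/x > c > 0`. -/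
def IsClassI (φ : ℝ → ℝ) : Prop :=
  ∃ c : ℝ, 0 < c ∧ ∀ᶠ x in atTop, c < φ x / x

/-- Data witnessing that a distribution with log-density `φ` (density `exp(-φ)`) is of
class (ii): heavier than exponential but lighter than any power law, together with the
auxiliary function `Φ` and the inverse `Ψ = Φ⁻¹` of its restriction to `[x̄, ∞)`. -/
structure ClassIIData (φ : ℝ → ℝ) : Type where
  xbar : ℝ
  Φ : ℝ → ℝ
  Ψ : ℝ → ℝ
  xbar_pos : 0 < xbar
  tendsto_div_id : Tendsto (fun x => φ x / x) atTop (nhds 0)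
  tendsto_div_log : Tendsto (fun x => φ x / Real.log x) atTop atTop
  pos : ∀ x ∈ Set.Ici xbar, 0 < Φ x
  strictConcave : StrictConcaveOn ℝ (Set.Ici xbar) Φ
  smooth : ContDiffOn ℝ 2 Φ (Set.Ici xbar)
  strictMono : StrictMonoOn Φ (Set.Ici xbar)
  inv_left : ∀ x ∈ Set.Ici xbar, Ψ (Φ x) = x
  inv_right : ∀ y ∈ Set.Ici (Φ xbar), Φ (Ψ y) = y
  liminf_pos : ∃ c : ℝ, 0 < c ∧ ∀ᶠ x in atTop, c ≤ Ψ (φ x) / x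
  limsup_lt_top : ∃ C : ℝ, ∀ᶠ x in atTop, Ψ (φ x) / x ≤ C

namespace ClassIIData

variable {φ : ℝ → ℝ}

/-- `ȳ = exp(Φ(x̄))`. -/
def ybar (d : ClassIIData φ) : ℝ := Real.exp (d.Φ d.xbar)

/-- The constant `a = (1+log ȳ)/(Φ⁻¹(log ȳ)^θ + θ Φ⁻¹(log ȳ)^{θ-1} (Φ⁻¹)'(log ȳ))`. -/
def aconst (d : ClassIIData φ) (θ : ℝ) : ℝ :=
  (1 + Real.log d.ybar) /
    (d.Ψ (Real.log d.ybar) ^ θ +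
      θ * d.Ψ (Real.log d.ybar) ^ (θ - 1) * deriv d.Ψ (Real.log d.ybar))

/-- The constant `b = ȳ log ȳ - a ȳ Φ⁻¹(log ȳ)^θ`. -/
def bconst (d : ClassIIData φ) (θ : ℝ) : ℝ :=
  d.ybar * Real.log d.ybar - d.aconst θ * d.ybar * d.Ψ (Real.log d.ybar) ^ θ

/-- The divergence generator `F_Φ`: `y log y` for `y ≤ ȳ` and
`a y Φ⁻¹(log y)^θ + b` for `y > ȳ`. -/
def FPhi (d : ClassIIData φ) (θ : ℝ) : ℝ → ℝ := fun y =>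
  if y ≤ d.ybar then y * Real.log y
  else d.aconst θ * y * d.Ψ (Real.log y) ^ θ + d.bconst θ

/-- `ψ(x) = a Φ⁻¹(x)^θ`. -/
def psiFun (d : ClassIIData φ) (θ : ℝ) : ℝ → ℝ := fun x => d.aconst θ * d.Ψ x ^ θ

/-- The integrand of `I(c) = ∫_c^∞ e^y (ψ(y)+ψ'(y))(ψ'(y)+ψ''(y)) f((F_Φ'(e^y)-α₁)/α₂) dy`. -/
def Iintegrand (d : ClassIIData φ) (θ α₁ α₂ : ℝ) (f : ℝ → ℝ) : ℝ → ℝ := fun y =>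
  Real.exp y * (d.psiFun θ y + deriv (d.psiFun θ) y) *
    (deriv (d.psiFun θ) y + deriv (deriv (d.psiFun θ)) y) *
    f ((deriv (d.FPhi θ) (Real.exp y) - α₁) / α₂)

end ClassIIData

/-- Convex conjugate over `s ≥ 0`: `F*(x) = sup_{s ≥ 0} (x s - F(s))`. -/
def Fstar (F : ℝ → ℝ) : ℝ → ℝ := fun x => sSup ((fun s => x * s - F s) '' Set.Ici (0 : ℝ))

/-- Pseudo-regular variation: `limsup_{c→1} limsup_{x→∞} h(cx)/h(x) = 1`,
spelled out in ε-form. -/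
def PseudoRegularlyVarying (h : ℝ → ℝ) : Prop :=
  (∀ ε > (0:ℝ), ∀ᶠ c in nhds (1:ℝ), ∀ᶠ x in atTop, h (c * x) / h x ≤ 1 + ε) ∧
  (∀ ε > (0:ℝ), ∃ᶠ c in nhds (1:ℝ), ∃ᶠ x in atTop, 1 - ε ≤ h (c * x) / h x)


/-! On `(0, ∞)` the integrand is `F(g/f) f = (exp((α-1)φ - αγ) - exp(-φ)) / (α(α-1))`.
Near `0` it is bounded, since `f` and `g/f` are bounded on compacts. In the tail, `γ ≥ c'φ`
(resp. `γ ≤ c'φ`) gives `(α-1)φ - αγ ≤ -kφ` (resp. `≥`) with `k = αc' - (α-1)`, and class (iii)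
makes `exp(-kφ)` comparable to `x^(-kc)`. The threshold `(α-1)/α + 1/(cα)` on `c'` is exactly
`kc = 1`, the borderline of integrability of `x^(-kc)` at infinity; `exp(-φ)` itself is
integrable there because `c > 1`. -/

open Real

lemma setLIntegral_Ioi_ofReal_rpow_eq_top {p T : ℝ} (hp : -1 ≤ p) (hT : 0 < T) :
    ∫⁻ x in Ioi T, ENNReal.ofReal (x ^ p) = ⊤ := by
  by_contra h
  have hint : IntegrableOn (fun x : ℝ => x ^ p) (Ioi T) :=
    (lintegral_ofReal_ne_top_iff_integrable
      (by fun_prop : Measurable fun x : ℝ => x ^ p).aestronglyMeasurable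
      ((ae_restrict_iff' measurableSet_Ioi).2 (ae_of_all _ fun x hx =>
        rpow_nonneg (hT.trans hx).le p))).1 h
  linarith [(integrableOn_Ioi_rpow_iff hT).1 hint]

lemma setLIntegral_Ioi_zero_ofReal_lt_top {h : ℝ → ℝ} {K p : ℝ} (hp : 1 < p)
    (hloc : ∀ T, ∃ C, ∀ x ∈ Ioc 0 T, h x ≤ C)
    (htail : ∀ᶠ x in atTop, h x ≤ K * x ^ (-p)) :
    ∫⁻ x in Ioi 0, ENNReal.ofReal (h x) < ⊤ := by
  obtain ⟨T, hT0, hT⟩ := (atTop_basis_Ioi' 0).eventually_iff.1 htail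
  obtain ⟨C, hC⟩ := hloc T
  rw [← Ioc_union_Ioi_eq_Ioi hT0.le]
  refine (lintegral_union_le _ _ _).trans_lt (ENNReal.add_lt_top.2 ⟨?_, ?_⟩)
  · exact setLIntegral_lt_top_of_le_nnreal measure_Ioc_lt_top.ne
      ⟨C.toNNReal, fun x hx => ENNReal.ofReal_le_ofReal (hC x hx)⟩
  · calc ∫⁻ x in Ioi T, ENNReal.ofReal (h x)
        ≤ ∫⁻ x in Ioi T, ENNReal.ofReal (K * x ^ (-p)) :=
          setLIntegral_mono' measurableSet_Ioi fun x hx => ENNReal.ofReal_le_ofReal (hT hx)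
      _ < ⊤ := IntegrableOn.setLIntegral_lt_top
          ((integrableOn_Ioi_rpow_of_lt (by linarith : -p < -1) hT0).const_mul K)

lemma setLIntegral_Ioi_zero_ofReal_eq_top {h : ℝ → ℝ} {K p r : ℝ} (hK : 0 < K) (hp : p ≤ 1)
    (hr : 1 < r) (htail : ∀ᶠ x in atTop, K * (x ^ (-p) - x ^ (-r)) ≤ h x) :
    ∫⁻ x in Ioi 0, ENNReal.ofReal (h x) = ⊤ := by
  obtain ⟨T, hT0, hT⟩ := (atTop_basis_Ioi' 0).eventually_iff.1 htail
  have hle : ∀ x ∈ Ioi T, ENNReal.ofReal (K * x ^ (-p)) ≤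
      ENNReal.ofReal (h x) + ENNReal.ofReal (K * x ^ (-r)) := fun x hx =>
    (ENNReal.ofReal_le_ofReal (by linarith [hT hx])).trans ENNReal.ofReal_add_le
  have hdiv : ∫⁻ x in Ioi T, ENNReal.ofReal (K * x ^ (-p)) = ⊤ := by
    simp_rw [ENNReal.ofReal_mul hK.le]
    rw [lintegral_const_mul' _ _ ENNReal.ofReal_ne_top,
      setLIntegral_Ioi_ofReal_rpow_eq_top (by linarith) hT0, ENNReal.mul_top (by positivity)]
  have hconv : ∫⁻ x in Ioi T, ENNReal.ofReal (K * x ^ (-r)) ≠ ⊤ :=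
    (IntegrableOn.setLIntegral_lt_top
      ((integrableOn_Ioi_rpow_of_lt (by linarith : -r < -1) hT0).const_mul K)).ne
  have hsum : (∫⁻ x in Ioi T, ENNReal.ofReal (h x)) +
      ∫⁻ x in Ioi T, ENNReal.ofReal (K * x ^ (-r)) = ⊤ :=
    eq_top_mono ((setLIntegral_mono' measurableSet_Ioi hle).trans_eq
      (lintegral_add_right _ (by fun_prop))) hdiv
  exact eq_top_mono (lintegral_mono_set (Ioi_subset_Ioi hT0.le))
    ((ENNReal.add_eq_top.1 hsum).resolve_right hconv)

section ClassIII

variable {φ : ℝ → ℝ} {c p : ℝ}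

lemma eventually_mul_log_lt (hφ : Tendsto (fun x => φ x / log x) atTop (𝓝 c)) (hp : p < c) :
    ∀ᶠ x in atTop, p * log x < φ x := by
  filter_upwards [hφ.eventually (eventually_gt_nhds hp), eventually_gt_atTop 1] with x hpx hx
  exact (lt_div_iff₀ (log_pos hx)).1 hpx

lemma eventually_lt_mul_log (hφ : Tendsto (fun x => φ x / log x) atTop (𝓝 c)) (hp : c < p) :
    ∀ᶠ x in atTop, φ x < p * log x := by
  filter_upwards [hφ.eventually (eventually_lt_nhds hp), eventually_gt_atTop 1] with x hpx hx
  exact (div_lt_iff₀ (log_pos hx)).1 hpx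

lemma eventually_exp_neg_le_rpow_neg (hφ : Tendsto (fun x => φ x / log x) atTop (𝓝 c))
    (hp : p < c) : ∀ᶠ x in atTop, exp (-φ x) ≤ x ^ (-p) := by
  filter_upwards [eventually_mul_log_lt hφ hp, eventually_gt_atTop 0] with x hpx hx
  rw [rpow_def_of_pos hx, exp_le_exp]
  linarith

lemma eventually_rpow_neg_le_exp_neg (hφ : Tendsto (fun x => φ x / log x) atTop (𝓝 c))
    (hp : c < p) : ∀ᶠ x in atTop, x ^ (-p) ≤ exp (-φ x) := by
  filter_upwards [eventually_lt_mul_log hφ hp, eventually_gt_atTop 0] with x hpx hx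
  rw [rpow_def_of_pos hx, exp_le_exp]
  linarith

end ClassIII

lemma Falpha_div_exp_mul_exp (α a b : ℝ) :
    Falpha α (exp (-b) / exp (-a)) * exp (-a) =
      (exp ((α - 1) * a - α * b) - exp (-a)) / (α * (α - 1)) := by
  rw [← exp_sub, Falpha, ← exp_mul, div_mul_eq_mul_div, sub_mul, one_mul, ← exp_add]
  ring_nf

lemma Falpha_div_exp_mul_exp_le {α a b c' : ℝ} (hα : 1 < α) (hab : c' * a ≤ b) :
    Falpha α (exp (-b) / exp (-a)) * exp (-a) ≤
      exp (-((α * c' - (α - 1)) * a)) / (α * (α - 1)) := by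
  rw [Falpha_div_exp_mul_exp]
  have hexp : exp ((α - 1) * a - α * b) ≤ exp (-((α * c' - (α - 1)) * a)) :=
    exp_le_exp.2 (by nlinarith)
  exact div_le_div_of_nonneg_right (by linarith [exp_pos (-a)]) (by nlinarith)

lemma le_Falpha_div_exp_mul_exp {α a b c' : ℝ} (hα : 1 < α) (hab : b ≤ c' * a) :
    (exp (-((α * c' - (α - 1)) * a)) - exp (-a)) / (α * (α - 1)) ≤
      Falpha α (exp (-b) / exp (-a)) * exp (-a) := by
  rw [Falpha_div_exp_mul_exp]
  have hexp : exp (-((α * c' - (α - 1)) * a)) ≤ exp ((α - 1) * a - α * b) :=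
    exp_le_exp.2 (by nlinarith)
  gcongr

lemma Falpha_mul_le {α y t C M : ℝ} (hα : 1 < α) (hy : 0 ≤ y) (hyC : y ≤ C) (ht : 0 ≤ t)
    (htM : t ≤ M) : Falpha α y * t ≤ C ^ α / (α * (α - 1)) * M := by
  have hD : 0 < α * (α - 1) := by nlinarith
  have hF : Falpha α y ≤ C ^ α / (α * (α - 1)) := by
    rw [Falpha]
    gcongr
    linarith [rpow_le_rpow hy hyC (by linarith : 0 ≤ α)]
  exact mul_le_mul hF htM ht (by have := rpow_nonneg (hy.trans hyC) α; positivity)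

lemma one_lt_mul_of_threshold_lt {α c c' : ℝ} (hα : 0 < α) (hc : 0 < c)
    (h : (α - 1) / α + 1 / (c * α) < c') : 1 < (α * c' - (α - 1)) * c := by
  rw [div_add_div _ _ hα.ne' (by positivity), div_lt_iff₀ (by positivity)] at h
  nlinarith

lemma mul_lt_one_of_lt_threshold {α c c' : ℝ} (hα : 0 < α) (hc : 0 < c)
    (h : c' < (α - 1) / α + 1 / (c * α)) : (α * c' - (α - 1)) * c < 1 := by
  rw [div_add_div _ _ hα.ne' (by positivity), lt_div_iff₀ (by positivity)] at h
  nlinarith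

section PolynomialTail

variable {φ γ f g : ℝ → ℝ} {α c c' : ℝ}

theorem Ddiv_Falpha_lt_top (hα : 1 < α) (hc : 0 < c)
    (hf : ∀ x ∈ Ioi (0:ℝ), f x = exp (-φ x)) (hg : ∀ x ∈ Ioi (0:ℝ), g x = exp (-γ x))
    (hφ : Tendsto (fun x => φ x / log x) atTop (𝓝 c))
    (hbdd : ∃ M : ℝ, ∀ x ∈ Ioi (0:ℝ), f x ≤ M)
    (hratio : ∀ K : Set ℝ, IsCompact K → ∃ C : ℝ, ∀ x ∈ K ∩ Ioi (0:ℝ), g x / f x ≤ C)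
    (hc' : (α - 1) / α + 1 / (c * α) < c') (hγ : ∀ᶠ x in atTop, c' ≤ γ x / φ x) :
    Ddiv (Falpha α) f g < ⊤ := by
  set k := α * c' - (α - 1)
  obtain ⟨p, hp, hpk⟩ := exists_between (one_lt_mul_of_threshold_lt (by linarith) hc hc')
  have hkφ : Tendsto (fun x => k * φ x / log x) atTop (𝓝 (k * c)) := by
    simpa only [mul_div_assoc] using hφ.const_mul k
  refine setLIntegral_Ioi_zero_ofReal_lt_top (K := (α * (α - 1))⁻¹) hp (fun T => ?_) ?_
  · obtain ⟨M, hM⟩ := hbdd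
    obtain ⟨C, hC⟩ := hratio (Icc 0 T) isCompact_Icc
    refine ⟨C ^ α / (α * (α - 1)) * M, fun x hx => Falpha_mul_le hα ?_
      (hC x ⟨Ioc_subset_Icc_self hx, hx.1⟩) ?_ (hM x hx.1)⟩
    · rw [hf x hx.1, hg x hx.1]
      positivity
    · rw [hf x hx.1]
      positivity
  · filter_upwards [eventually_gt_atTop 0, eventually_mul_log_lt hφ hc, hγ,
      eventually_exp_neg_le_rpow_neg hkφ hpk] with x hx hφx hγx hdecay
    rw [hf x hx, hg x hx, inv_mul_eq_div]
    calc Falpha α (exp (-γ x) / exp (-φ x)) * exp (-φ x)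
        ≤ exp (-(k * φ x)) / (α * (α - 1)) :=
          Falpha_div_exp_mul_exp_le hα ((le_div_iff₀ (by simpa using hφx)).1 hγx)
      _ ≤ x ^ (-p) / (α * (α - 1)) := by gcongr

theorem Ddiv_Falpha_eq_top (hα : 1 < α) (hc : 1 < c)
    (hf : ∀ x ∈ Ioi (0:ℝ), f x = exp (-φ x)) (hg : ∀ x ∈ Ioi (0:ℝ), g x = exp (-γ x))
    (hφ : Tendsto (fun x => φ x / log x) atTop (𝓝 c))
    (hc' : c' < (α - 1) / α + 1 / (c * α)) (hγ : ∀ᶠ x in atTop, γ x / φ x ≤ c') :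
    Ddiv (Falpha α) f g = ⊤ := by
  set k := α * c' - (α - 1)
  have hkc := mul_lt_one_of_lt_threshold (by linarith) (by linarith) hc'
  obtain ⟨r, hr, hrc⟩ := exists_between hc
  have hkφ : Tendsto (fun x => k * φ x / log x) atTop (𝓝 (k * c)) := by
    simpa only [mul_div_assoc] using hφ.const_mul k
  refine setLIntegral_Ioi_zero_ofReal_eq_top (K := (α * (α - 1))⁻¹) (p := 1) (r := r)
    (inv_pos.2 (by nlinarith)) le_rfl hr ?_
  filter_upwards [eventually_gt_atTop 0, eventually_mul_log_lt hφ (by linarith : (0:ℝ) < c), hγ,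
    eventually_rpow_neg_le_exp_neg hkφ hkc, eventually_exp_neg_le_rpow_neg hφ hrc]
    with x hx hφx hγx hkdecay hdecay
  rw [hf x hx, hg x hx, inv_mul_eq_div]
  calc (x ^ (-1 : ℝ) - x ^ (-r)) / (α * (α - 1))
      ≤ (exp (-(k * φ x)) - exp (-φ x)) / (α * (α - 1)) := by gcongr
    _ ≤ Falpha α (exp (-γ x) / exp (-φ x)) * exp (-φ x) :=
        le_Falpha_div_exp_mul_exp hα ((div_le_iff₀ (by simpa using hφx)).1 hγx)

end PolynomialTail

theorem stmt3_general
    (φ γ f g : ℝ → ℝ) (α : ℝ) (hα : 1 < α) (c : ℝ) (hc : 1 < c)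
    (hf : ∀ x ∈ Set.Ioi (0:ℝ), f x = Real.exp (-(φ x)))
    (hg : ∀ x ∈ Set.Ioi (0:ℝ), g x = Real.exp (-(γ x)))
    (hclassiii : Tendsto (fun x => φ x / Real.log x) atTop (nhds c))
    (hbdd : ∃ M : ℝ, ∀ x ∈ Set.Ioi (0:ℝ), f x ≤ M)
    (hratio : ∀ K : Set ℝ, IsCompact K → ∃ C : ℝ, ∀ x ∈ K ∩ Set.Ioi (0:ℝ), g x / f x ≤ C) :
    ((∃ c' : ℝ, (α - 1) / α + 1 / (c * α) < c' ∧ ∀ᶠ x in atTop, c' ≤ γ x / φ x) →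
        Ddiv (Falpha α) f g < ⊤) ∧
    ((∃ c' : ℝ, c' < (α - 1) / α + 1 / (c * α) ∧ ∀ᶠ x in atTop, γ x / φ x ≤ c') →
        Ddiv (Falpha α) f g = ⊤) :=
  ⟨fun ⟨_, hc', hγ⟩ =>
      Ddiv_Falpha_lt_top hα (by linarith) hf hg hclassiii hbdd hratio hc' hγ,
    fun ⟨_, hc', hγ⟩ => Ddiv_Falpha_eq_top hα hc hf hg hclassiii hc' hγ⟩

/-- Proposition 3.3 (ii): α-divergence balls around class (iii) models. -/
theorem stmt3
    (φ γ f g : ℝ → ℝ) (α : ℝ) (hα : 1 < α) (c : ℝ) (hc : 1 < c)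
    (hf : ∀ x ∈ Set.Ioi (0:ℝ), f x = Real.exp (-(φ x)))
    (hg : ∀ x ∈ Set.Ioi (0:ℝ), g x = Real.exp (-(γ x)))
    (hfc : ContinuousOn f (Set.Ioi 0)) (hgc : ContinuousOn g (Set.Ioi 0))
    (hfint : ∫ x in Set.Ioi (0:ℝ), f x = 1)
    (hgint : ∫ x in Set.Ioi (0:ℝ), g x = 1)
    (hclassiii : Tendsto (fun x => φ x / Real.log x) atTop (nhds c))
    (hbdd : ∃ M : ℝ, ∀ x ∈ Set.Ioi (0:ℝ), f x ≤ M)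
    (hratio : ∀ K : Set ℝ, IsCompact K → ∃ C : ℝ, ∀ x ∈ K ∩ Set.Ioi (0:ℝ), g x / f x ≤ C)
    (hlim : ∃ L : ℝ, Tendsto (fun x => φ x / γ x) atTop (nhds L)) :
    ((∃ c' : ℝ, (α - 1) / α + 1 / (c * α) < c' ∧ ∀ᶠ x in atTop, c' ≤ γ x / φ x) →
        Ddiv (Falpha α) f g < ⊤) ∧
    ((∃ c' : ℝ, c' < (α - 1) / α + 1 / (c * α) ∧ ∀ᶠ x in atTop, γ x / φ x ≤ c') →
        Ddiv (Falpha α) f g = ⊤) :=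
  stmt3_general φ γ f g α hα c hc hf hg hclassiii hbdd hratio
end
end

section
/- Let ν be a class (ii) distribution with associated functions f, φ, Φ, let θ>1, and let F_Φ be the associated divergence-generating function. Then for any probability measure η on [0,∞) with density g, if D^α(η|ν) < ∞ for some α>1 (α-divergence), then D_{F_Φ}(η|ν) < ∞. -/
open Filter MeasureTheory Set
open scoped ENNReal Topology

noncomputable section

/-!
On `[0, ȳ]` the generator `F_Φ(y) = y log y` is bounded. Beyond `ȳ`, the class (ii) conditions
`φ(x) ≥ M log x` (for every `M`) and `Φ⁻¹(φ(x)) ≤ C x` show that `Φ⁻¹(t) ≤ K e^{εt}` for every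
`ε > 0`, so `F_Φ(y) ≲ y Φ⁻¹(log y)^θ ≲ y · y^{α-1}`. Hence `F_Φ(y) ≤ K (1 + y^α)` on `[0, ∞)`,
and integrating against `f` bounds `D_{F_Φ}(η|ν)` by an affine function of `D^α(η|ν)`.
-/

namespace ClassIIData

variable {φ : ℝ → ℝ}

theorem tendsto_atTop (d : ClassIIData φ) : Tendsto φ atTop atTop :=
  (d.tendsto_div_log.atTop_mul_atTop₀ Real.tendsto_log_atTop).congr' <| by
    filter_upwards [eventually_gt_atTop 1] with x hx
    exact div_mul_cancel₀ _ (Real.log_pos hx).ne'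

theorem eventually_mul_log_le (d : ClassIIData φ) (M : ℝ) :
    ∀ᶠ x in atTop, M * Real.log x ≤ φ x := by
  filter_upwards [d.tendsto_div_log.eventually_ge_atTop M, eventually_gt_atTop 1] with x hM hx
  exact (le_div_iff₀ (Real.log_pos hx)).1 hM

theorem exists_eq_Φ (d : ClassIIData φ) {s : ℝ} (hs : d.Φ d.xbar ≤ s) :
    ∃ z, d.xbar ≤ z ∧ d.Φ z = s := by
  obtain ⟨c, hc, hcΨ⟩ := d.liminf_pos
  obtain ⟨x, hsx, hcx, hx, hxbar⟩ := (d.tendsto_atTop.eventually_ge_atTop s |>.and <|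
    hcΨ.and <| (eventually_gt_atTop 0).and <|
      (tendsto_id.const_mul_atTop hc).eventually_ge_atTop d.xbar).exists
  have hz : d.xbar ≤ d.Ψ (φ x) := hxbar.trans <| (le_div_iff₀ hx).1 hcx
  have hΦz : d.Φ (d.Ψ (φ x)) = φ x := d.inv_right _ (hs.trans hsx)
  obtain ⟨z, hzmem, hΦ⟩ :=
    intermediate_value_Icc hz (d.smooth.continuousOn.mono Icc_subset_Ici_self)
      ⟨hs, hΦz.symm ▸ hsx⟩
  exact ⟨z, hzmem.1, hΦ⟩

theorem xbar_le_Ψ (d : ClassIIData φ) {s : ℝ} (hs : d.Φ d.xbar ≤ s) : d.xbar ≤ d.Ψ s := by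
  obtain ⟨z, hz, rfl⟩ := d.exists_eq_Φ hs
  rwa [d.inv_left z hz]

theorem monotoneOn_Ψ (d : ClassIIData φ) : MonotoneOn d.Ψ (Ici (d.Φ d.xbar)) := by
  intro s hs t ht hst
  obtain ⟨z, hz, rfl⟩ := d.exists_eq_Φ hs
  obtain ⟨w, hw, rfl⟩ := d.exists_eq_Φ ht
  rw [d.inv_left z hz, d.inv_left w hw]
  exact (d.strictMono.le_iff_le hz hw).1 hst

/-- `Φ⁻¹` grows slower than every exponential: pick `x = X e^{εt}` in `Φ⁻¹(φ(x)) ≤ C x`;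
since `φ(x) ≥ ε⁻¹ log x ≥ t`, monotonicity gives `Φ⁻¹(t) ≤ C X e^{εt}`. -/
theorem exists_Ψ_le_mul_exp (d : ClassIIData φ) {ε : ℝ} (hε : 0 < ε) :
    ∃ K, ∀ t, d.Φ d.xbar ≤ t → d.Ψ t ≤ K * Real.exp (ε * t) := by
  obtain ⟨C, hC⟩ := d.limsup_lt_top
  obtain ⟨X, hX⟩ := eventually_atTop.1 <|
    hC.and <| (d.eventually_mul_log_le ε⁻¹).and (eventually_ge_atTop 1)
  refine ⟨C * max X 1, fun t ht => ?_⟩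
  have ht0 : 0 ≤ t := (d.pos _ self_mem_Ici).le.trans ht
  set x := max X 1 * Real.exp (ε * t)
  have hXx : max X 1 ≤ x :=
    le_mul_of_one_le_right (by positivity) (Real.one_le_exp (by positivity))
  obtain ⟨hΨx, hlog, hx1⟩ := hX x ((le_max_left _ _).trans hXx)
  have hlogx : ε⁻¹ * Real.log x = ε⁻¹ * Real.log (max X 1) + t := by
    rw [Real.log_mul (by positivity) (Real.exp_pos _).ne', Real.log_exp]
    field_simp
  have htx : t ≤ φ x := by
    have : 0 ≤ ε⁻¹ * Real.log (max X 1) := by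
      have := Real.log_nonneg (le_max_right X 1); positivity
    linarith
  calc d.Ψ t ≤ d.Ψ (φ x) := d.monotoneOn_Ψ ht (ht.trans htx) htx
    _ ≤ C * x := (div_le_iff₀ (by linarith)).1 hΨx
    _ = C * max X 1 * Real.exp (ε * t) := by ring

theorem Φ_xbar_le_log (d : ClassIIData φ) {y : ℝ} (hy : d.ybar < y) :
    d.Φ d.xbar ≤ Real.log y :=
  ((Real.lt_log_iff_exp_lt ((Real.exp_pos _).trans hy)).2 hy).le

theorem exists_Ψ_log_rpow_le (d : ClassIIData φ) {θ p : ℝ} (hθ : 0 < θ) (hp : 0 < p) :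
    ∃ K, 0 ≤ K ∧ ∀ y, d.ybar < y → d.Ψ (Real.log y) ^ θ ≤ K * y ^ p := by
  obtain ⟨K, hK⟩ := d.exists_Ψ_le_mul_exp (div_pos hp hθ)
  have hK0 : 0 < K := pos_of_mul_pos_left
    ((d.xbar_pos.trans_le (d.xbar_le_Ψ le_rfl)).trans_le (hK _ le_rfl)) (Real.exp_pos _).le
  refine ⟨K ^ θ, Real.rpow_nonneg hK0.le θ, fun y hy => ?_⟩
  have hlog := d.Φ_xbar_le_log hy
  calc d.Ψ (Real.log y) ^ θ ≤ (K * Real.exp (p / θ * Real.log y)) ^ θ :=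
        Real.rpow_le_rpow (d.xbar_pos.le.trans (d.xbar_le_Ψ hlog)) (hK _ hlog) hθ.le
    _ = K ^ θ * y ^ p := by
        rw [Real.mul_rpow hK0.le (Real.exp_pos _).le, ← Real.exp_mul,
          Real.rpow_def_of_pos ((Real.exp_pos _).trans hy)]
        congr 2
        field_simp

theorem exists_FPhi_le (d : ClassIIData φ) {θ α : ℝ} (hθ : 0 < θ) (hα : 1 < α) :
    ∃ K, 0 ≤ K ∧ ∀ y, 0 ≤ y → d.FPhi θ y ≤ K * (1 + y ^ α) := by
  obtain ⟨K, hK0, hK⟩ := d.exists_Ψ_log_rpow_le hθ (sub_pos.2 hα)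
  set A := |d.aconst θ|
  set B := |d.bconst θ|
  have hA : 0 ≤ A := abs_nonneg _
  have hB : 0 ≤ B := abs_nonneg _
  set K' := d.ybar * d.ybar + A * K + B
  have hK' : 0 ≤ K' := by have := mul_self_nonneg d.ybar; have := mul_nonneg hA hK0; linarith
  refine ⟨K', hK', fun y hy => ?_⟩
  have hyα : 0 ≤ y ^ α := Real.rpow_nonneg hy α
  unfold FPhi
  split_ifs with hyb
  · calc y * Real.log y ≤ y * y := mul_le_mul_of_nonneg_left (Real.log_le_self hy) hy
      _ ≤ d.ybar * d.ybar := mul_self_le_mul_self hy hyb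
      _ ≤ K' := by linarith [mul_nonneg hA hK0]
      _ ≤ K' * (1 + y ^ α) := le_mul_of_one_le_right hK' (by linarith)
  · rw [not_le] at hyb
    have hy0 : 0 < y := (Real.exp_pos _).trans hyb
    have hΨ : 0 ≤ d.Ψ (Real.log y) ^ θ :=
      Real.rpow_nonneg (d.xbar_pos.le.trans (d.xbar_le_Ψ (d.Φ_xbar_le_log hyb))) θ
    have hyΨ : y * d.Ψ (Real.log y) ^ θ ≤ K * y ^ α :=
      calc y * d.Ψ (Real.log y) ^ θ ≤ y * (K * y ^ (α - 1)) :=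
            mul_le_mul_of_nonneg_left (hK y hyb) hy
        _ = K * y ^ α := by rw [Real.rpow_sub_one hy0.ne']; field_simp
    calc d.aconst θ * y * d.Ψ (Real.log y) ^ θ + d.bconst θ
        ≤ A * (y * d.Ψ (Real.log y) ^ θ) + B := by
          rw [mul_assoc]
          exact add_le_add (mul_le_mul_of_nonneg_right (le_abs_self _) (mul_nonneg hy hΨ))
            (le_abs_self _)
      _ ≤ A * (K * y ^ α) + B := by gcongr
      _ ≤ K' * (1 + y ^ α) := by
          nlinarith [mul_nonneg (mul_nonneg hA hK0) hyα, mul_nonneg hB hyα,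
            mul_nonneg (mul_self_nonneg d.ybar) hyα]

end ClassIIData

theorem mul_Falpha {α : ℝ} (h0 : α ≠ 0) (h1 : α ≠ 1) (y : ℝ) :
    α * (α - 1) * Falpha α y = y ^ α - 1 := by
  have := sub_ne_zero.2 h1
  unfold Falpha
  field_simp

theorem Ddiv_lt_top_of_le_add_mul {F G f g : ℝ → ℝ} {K L : ℝ} (hL : 0 ≤ L)
    (hFG : ∀ y, 0 ≤ y → F y ≤ K + L * G y) (hf0 : ∀ x ∈ Ioi (0 : ℝ), 0 ≤ f x)
    (hg0 : ∀ x ∈ Ioi (0 : ℝ), 0 ≤ g x) (hf : IntegrableOn f (Ioi 0))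
    (hG : Ddiv G f g < ⊤) : Ddiv F f g < ⊤ := by
  have hpt : ∀ x ∈ Ioi (0 : ℝ), ENNReal.ofReal (F (g x / f x) * f x) ≤
      ENNReal.ofReal (K * f x) + ENNReal.ofReal L * ENNReal.ofReal (G (g x / f x) * f x) := by
    intro x hx
    have hF := mul_le_mul_of_nonneg_right (hFG _ (div_nonneg (hg0 x hx) (hf0 x hx))) (hf0 x hx)
    calc ENNReal.ofReal (F (g x / f x) * f x)
        ≤ ENNReal.ofReal (K * f x + L * (G (g x / f x) * f x)) :=
          ENNReal.ofReal_le_ofReal (by linarith)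
      _ ≤ _ := ENNReal.ofReal_add_le.trans_eq (by rw [ENNReal.ofReal_mul hL])
  calc Ddiv F f g
      ≤ ∫⁻ x in Ioi 0, ENNReal.ofReal (K * f x) +
          ENNReal.ofReal L * ENNReal.ofReal (G (g x / f x) * f x) :=
        setLIntegral_mono' measurableSet_Ioi hpt
    _ = (∫⁻ x in Ioi 0, ENNReal.ofReal (K * f x)) + ENNReal.ofReal L * Ddiv G f g := by
        rw [lintegral_add_left' (hf.const_mul K).aemeasurable.ennreal_ofReal,
          lintegral_const_mul' _ _ ENNReal.ofReal_ne_top, Ddiv]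
    _ < ⊤ := ENNReal.add_lt_top.2
        ⟨(hf.const_mul K).lintegral_lt_top, ENNReal.mul_lt_top ENNReal.ofReal_lt_top hG⟩

theorem stmt8_general
    (φ f : ℝ → ℝ)
    (hf : ∀ x ∈ Set.Ioi (0:ℝ), f x = Real.exp (-(φ x)))
    (hfint : ∫ x in Set.Ioi (0:ℝ), f x = 1)
    (d : ClassIIData φ) (θ : ℝ) (hθ : 1 < θ)
    (g : ℝ → ℝ)
    (hg0 : ∀ x ∈ Set.Ioi (0:ℝ), 0 ≤ g x)
    (hfin : ∃ α : ℝ, 1 < α ∧ Ddiv (Falpha α) f g < ⊤) :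
    Ddiv (d.FPhi θ) f g < ⊤ := by
  obtain ⟨α, hα, hDα⟩ := hfin
  obtain ⟨K, hK0, hK⟩ := d.exists_FPhi_le (zero_lt_one.trans hθ) hα
  have hf0 : ∀ x ∈ Ioi (0 : ℝ), 0 ≤ f x := fun x hx => hf x hx ▸ (Real.exp_pos _).le
  have hfi : IntegrableOn f (Ioi 0) :=
    Integrable.of_integral_ne_zero (by rw [hfint]; exact one_ne_zero)
  have hα0 : 0 ≤ α * (α - 1) := mul_nonneg (by linarith) (by linarith)
  refine Ddiv_lt_top_of_le_add_mul (K := 2 * K) (mul_nonneg hK0 hα0) (fun y hy => ?_)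
    hf0 hg0 hfi hDα
  calc d.FPhi θ y ≤ K * (1 + y ^ α) := hK y hy
    _ = 2 * K + K * (α * (α - 1)) * Falpha α y := by
        rw [mul_assoc, mul_Falpha (by linarith) hα.ne']
        ring

/-- Proposition 4.3, second half: finite α-divergence implies finite
`F_Φ`-divergence. -/
theorem stmt8
    (φ f : ℝ → ℝ)
    (hf : ∀ x ∈ Set.Ioi (0:ℝ), f x = Real.exp (-(φ x)))
    (hfc : ContinuousOn f (Set.Ioi 0))
    (hfint : ∫ x in Set.Ioi (0:ℝ), f x = 1)
    (d : ClassIIData φ) (θ : ℝ) (hθ : 1 < θ)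
    (g : ℝ → ℝ) (hgc : ContinuousOn g (Set.Ioi 0))
    (hg0 : ∀ x ∈ Set.Ioi (0:ℝ), 0 ≤ g x)
    (hgint : ∫ x in Set.Ioi (0:ℝ), g x = 1)
    (hfin : ∃ α : ℝ, 1 < α ∧ Ddiv (Falpha α) f g < ⊤) :
    Ddiv (d.FPhi θ) f g < ⊤ :=
  stmt8_general φ f hf hfint d θ hθ g hg0 hfin
end
end

section
/- Let ν be a class (ii) distribution with associated functions f, φ, Φ and let θ > 1. Assume that for all constants α ≥ 0 and all s ∈ (0,1), liminf_{x→∞} Φ⁻¹(φ(x) − α log(x)) / x^s > 0. Let η be a probability measure on [0,∞) with density g satisfying liminf_{x→∞} x^{t+1} g(x) > 0 for some t ∈ (1, θ). Then D_{F_Φ}(η|ν) = ∞. -/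
open Filter MeasureTheory Set
open scoped ENNReal Topology

noncomputable section

namespace ClassIIData

lemma psi_ge_xbar {φ : ℝ → ℝ} (d : ClassIIData φ) {y : ℝ}
    (hy : d.Φ d.xbar ≤ y) : d.xbar ≤ d.Ψ y := by
  obtain ⟨c, hc, hev⟩ := d.liminf_pos
  have hφtop : Tendsto φ atTop atTop := by
    have h1 : ∀ᶠ x in atTop, Real.log x ≤ φ x := by
      filter_upwards [d.tendsto_div_log.eventually_ge_atTop 1, eventually_gt_atTop 1]
        with x h1 h2
      have hl : 0 < Real.log x := Real.log_pos h2
      have h3 := mul_le_mul_of_nonneg_right h1 hl.le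
      rwa [one_mul, div_mul_cancel₀ _ hl.ne'] at h3
    exact tendsto_atTop_mono' _ h1 Real.tendsto_log_atTop
  obtain ⟨X, hy1, hev1, h3', h4'⟩ :=
    ((hφtop.eventually_ge_atTop y).and (hev.and
      ((eventually_ge_atTop (d.xbar / c)).and (eventually_gt_atTop 0)))).exists
  have hΦX : d.Φ d.xbar ≤ φ X := hy.trans hy1
  have hx₀ge : d.xbar ≤ d.Ψ (φ X) := by
    have h5 : c * X ≤ d.Ψ (φ X) := (le_div_iff₀ h4').1 hev1
    have h6 : d.xbar ≤ c * X := by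
      have := (div_le_iff₀ hc).1 h3'
      linarith [this]
    linarith
  have hΦx₀ : d.Φ (d.Ψ (φ X)) = φ X := d.inv_right _ hΦX
  have hcont : ContinuousOn d.Φ (Set.Icc d.xbar (d.Ψ (φ X))) :=
    d.smooth.continuousOn.mono (Set.Icc_subset_Ici_self)
  have hsub := intermediate_value_Icc hx₀ge hcont
  obtain ⟨x, hxmem, hΦx⟩ := hsub ⟨hy, by rw [hΦx₀]; exact hy1⟩
  have hΨy : d.Ψ y = x := by rw [← hΦx, d.inv_left x hxmem.1]
  rw [hΨy]
  exact hxmem.1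

lemma psi_mono {φ : ℝ → ℝ} (d : ClassIIData φ) {y₁ y₂ : ℝ}
    (h1 : d.Φ d.xbar ≤ y₁) (h12 : y₁ ≤ y₂) : d.Ψ y₁ ≤ d.Ψ y₂ := by
  by_contra h
  push_neg at h
  have h2 : d.Φ d.xbar ≤ y₂ := h1.trans h12
  have h3 := d.strictMono (d.psi_ge_xbar h2) (d.psi_ge_xbar h1) h
  rw [d.inv_right _ h2, d.inv_right _ h1] at h3
  linarith

lemma derivPsi_nonneg {φ : ℝ → ℝ} (d : ClassIIData φ) :
    0 ≤ deriv d.Ψ (d.Φ d.xbar) := by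
  by_cases hdiff : DifferentiableAt ℝ d.Ψ (d.Φ d.xbar)
  · have h := hdiff.hasDerivAt
    rw [hasDerivAt_iff_tendsto_slope] at h
    have h2 : Tendsto (slope d.Ψ (d.Φ d.xbar)) (𝓝[>] (d.Φ d.xbar))
        (𝓝 (deriv d.Ψ (d.Φ d.xbar))) :=
      h.mono_left (nhdsWithin_mono _ fun x (hx : d.Φ d.xbar < x) => Set.mem_compl_singleton_iff.2 (LT.lt.ne' hx))
    refine ge_of_tendsto h2 ?_
    filter_upwards [self_mem_nhdsWithin] with x hx
    have hx' : d.Φ d.xbar < x := hx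
    rw [slope_def_field]
    exact div_nonneg (sub_nonneg.2 (d.psi_mono le_rfl hx'.le)) (sub_nonneg.2 hx'.le)
  · rw [deriv_zero_of_not_differentiableAt hdiff]

lemma aconst_pos {φ : ℝ → ℝ} (d : ClassIIData φ) {θ : ℝ} (hθ : 1 < θ) :
    0 < d.aconst θ := by
  have hxb := d.xbar_pos
  have hΦpos : 0 < d.Φ d.xbar := d.pos _ Set.self_mem_Ici
  have hlog : Real.log d.ybar = d.Φ d.xbar := Real.log_exp _
  have hd := d.derivPsi_nonneg
  rw [ClassIIData.aconst, hlog, d.inv_left _ Set.self_mem_Ici]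
  apply div_pos (by linarith)
  have h1 : 0 < d.xbar ^ θ := Real.rpow_pos_of_pos hxb θ
  have h2 : 0 ≤ θ * d.xbar ^ (θ - 1) * deriv d.Ψ (d.Φ d.xbar) :=
    mul_nonneg (mul_nonneg (by linarith) (Real.rpow_pos_of_pos hxb _).le) hd
  linarith

end ClassIIData

lemma lintegral_rpow_Ioi_eq_top {X p : ℝ} (hX : 0 < X) (hp : -1 < p) :
    ∫⁻ x in Set.Ioi X, ENNReal.ofReal (x ^ p) = ⊤ := by
  by_contra h
  have hint : IntegrableOn (fun x : ℝ => x ^ p) (Set.Ioi X) := by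
    constructor
    · refine (ContinuousOn.aestronglyMeasurable ?_ measurableSet_Ioi)
      exact fun x hx =>
        (Real.continuousAt_rpow_const x p (Or.inl (ne_of_gt (hX.trans hx)))).continuousWithinAt
    · rw [hasFiniteIntegral_iff_ofReal ?_]
      · exact Ne.lt_top h
      · filter_upwards [ae_restrict_mem measurableSet_Ioi] with x hx
        exact Real.rpow_nonneg (le_of_lt (hX.trans hx)) p
  rw [integrableOn_Ioi_rpow_iff hX] at hint
  linarith

/-- the general sufficient condition in the proof of Proposition 4.5. -/
theorem stmt13
    (φ f : ℝ → ℝ)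
    (hf : ∀ x ∈ Set.Ioi (0:ℝ), f x = Real.exp (-(φ x)))
    (hfc : ContinuousOn f (Set.Ioi 0))
    (hfint : ∫ x in Set.Ioi (0:ℝ), f x = 1)
    (d : ClassIIData φ) (θ : ℝ) (hθ : 1 < θ)
    (hcond : ∀ α : ℝ, 0 ≤ α → ∀ s ∈ Set.Ioo (0:ℝ) 1,
      ∃ c : ℝ, 0 < c ∧ ∀ᶠ x in atTop, c ≤ d.Ψ (φ x - α * Real.log x) / x ^ s)
    (g : ℝ → ℝ) (hgc : ContinuousOn g (Set.Ioi 0))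
    (hg0 : ∀ x ∈ Set.Ioi (0:ℝ), 0 ≤ g x)
    (hgint : ∫ x in Set.Ioi (0:ℝ), g x = 1)
    (ht : ∃ t : ℝ, 1 < t ∧ t < θ ∧ ∃ c : ℝ, 0 < c ∧ ∀ᶠ x in atTop, c ≤ x ^ (t + 1) * g x) :
    Ddiv (d.FPhi θ) f g = ⊤ := by
  obtain ⟨t, ht1, htθ, c₁, hc₁, hgev⟩ := ht
  have hθ0 : (0:ℝ) < θ := by linarith
  have ht0 : (0:ℝ) < t := by linarith
  set α : ℝ := t + 2 with hα
  set s : ℝ := (t / θ + 1) / 2 with hs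
  have hs0 : 0 < s := by rw [hs]; positivity
  have hs1 : s < 1 := by
    have h : t / θ < 1 := (div_lt_one hθ0).2 htθ
    rw [hs]; linarith
  have hsθ : t < s * θ := by
    have h : s * θ = (t + θ) / 2 := by rw [hs]; field_simp
    rw [h]; linarith
  set δ : ℝ := s * θ - t with hδ
  have hδ0 : 0 < δ := by rw [hδ]; linarith
  obtain ⟨c₂, hc₂, hΨev⟩ := hcond α (by rw [hα]; linarith) s ⟨hs0, hs1⟩
  have hA : 0 < d.aconst θ := d.aconst_pos hθ
  set C : ℝ := d.aconst θ * c₁ * c₂ ^ θ with hC'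
  have hc₂θ : 0 < c₂ ^ θ := Real.rpow_pos_of_pos hc₂ θ
  have hC : 0 < C := by rw [hC']; exact mul_pos (mul_pos hA hc₁) hc₂θ
  -- `φ` grows faster than any multiple of `log`
  have hφK : ∀ K : ℝ, ∀ᶠ x in atTop, K * Real.log x ≤ φ x := by
    intro K
    filter_upwards [d.tendsto_div_log.eventually_ge_atTop K, eventually_gt_atTop 1]
      with x h1 h2
    have hl : 0 < Real.log x := Real.log_pos h2
    have h3 := mul_le_mul_of_nonneg_right h1 hl.le
    rwa [div_mul_cancel₀ _ hl.ne'] at h3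
  -- the `b`-term is eventually dominated
  have hbev : ∀ᶠ x in atTop,
      |d.bconst θ| * Real.exp (-(φ x)) ≤ C / 2 * x ^ (δ - 1) := by
    filter_upwards [hφK (2 + |δ - 1|), eventually_ge_atTop (2 * |d.bconst θ| / C),
      eventually_gt_atTop 1] with x h1 h2 h3
    have hx0 : (0:ℝ) < x := by linarith
    have hl : 0 ≤ Real.log x := Real.log_nonneg (by linarith)
    have hneg : -|δ - 1| * Real.log x ≤ (δ - 1) * Real.log x :=
      mul_le_mul_of_nonneg_right (neg_abs_le _) hl
    have hexp : Real.log x ≤ φ x + (δ - 1) * Real.log x := by nlinarith [h1, hneg, hl]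
    have hBle : |d.bconst θ| ≤ C / 2 * Real.exp (φ x + (δ - 1) * Real.log x) := by
      have hxe : x ≤ Real.exp (φ x + (δ - 1) * Real.log x) :=
        le_trans (le_of_eq (Real.exp_log hx0).symm) (Real.exp_le_exp.2 hexp)
      have h2b : 2 * |d.bconst θ| / C ≤ Real.exp (φ x + (δ - 1) * Real.log x) :=
        le_trans h2 hxe
      rw [div_le_iff₀ hC] at h2b
      linarith
    have hE : Real.exp (φ x + (δ - 1) * Real.log x) * Real.exp (-(φ x)) = x ^ (δ - 1) := by
      rw [← Real.exp_add, Real.rpow_def_of_pos hx0]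
      congr 1
      ring
    calc |d.bconst θ| * Real.exp (-(φ x))
        ≤ C / 2 * Real.exp (φ x + (δ - 1) * Real.log x) * Real.exp (-(φ x)) :=
          mul_le_mul_of_nonneg_right hBle (Real.exp_pos _).le
      _ = C / 2 * x ^ (δ - 1) := by rw [mul_assoc, hE]
  -- the key pointwise lower bound
  have hmain : ∀ᶠ x in atTop,
      C / 2 * x ^ (δ - 1) ≤ d.FPhi θ (g x / f x) * f x := by
    filter_upwards [hgev, hΨev, hφK (α + 1), hbev, eventually_gt_atTop 1,
      eventually_ge_atTop (1 / c₁),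
      Real.tendsto_log_atTop.eventually_ge_atTop (d.Φ d.xbar + 1)]
      with x hgx hΨx hφ1 hbx hx1 hxc hΦlog
    have hx0 : (0:ℝ) < x := by linarith
    have hfx : f x = Real.exp (-(φ x)) := hf x hx0
    have hfpos : 0 < f x := by rw [hfx]; exact Real.exp_pos _
    have hlx : 0 < Real.log x := Real.log_pos hx1
    have hxt : 0 < x ^ (t + 1) := Real.rpow_pos_of_pos hx0 _
    have hgx' : c₁ / x ^ (t + 1) ≤ g x := by
      rw [div_le_iff₀ hxt, mul_comm]
      exact hgx
    have hgpos : 0 < g x := lt_of_lt_of_le (div_pos hc₁ hxt) hgx'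
    have hy0 : 0 < g x / f x := div_pos hgpos hfpos
    have hlogy : Real.log (g x / f x) = Real.log (g x) + φ x := by
      rw [Real.log_div hgpos.ne' hfpos.ne', hfx, Real.log_exp]; ring
    have hloggx : Real.log c₁ - (t + 1) * Real.log x ≤ Real.log (g x) := by
      have h5 := Real.log_le_log (div_pos hc₁ hxt) hgx'
      rwa [Real.log_div hc₁.ne' hxt.ne', Real.log_rpow hx0] at h5
    have hlogc : 0 ≤ Real.log c₁ + Real.log x := by
      have h6 : Real.log (1 / c₁) ≤ Real.log x := Real.log_le_log (by positivity) hxc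
      rw [Real.log_div one_ne_zero hc₁.ne', Real.log_one] at h6
      linarith
    have hLlb : φ x - α * Real.log x ≤ Real.log (g x / f x) := by
      rw [hlogy, hα]
      linarith [hloggx, hlogc]
    have hkey1 : d.Φ d.xbar ≤ φ x - α * Real.log x := by linarith [hφ1, hΦlog]
    have hkey2 : d.Φ d.xbar ≤ Real.log (g x / f x) := le_trans hkey1 hLlb
    have hybar : d.ybar < g x / f x := by
      have hφ1' : α * Real.log x + Real.log x ≤ φ x := by
        have := hφ1; rw [add_mul, one_mul] at this; linarith
      have h7 : d.Φ d.xbar < Real.log (g x / f x) := by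
        calc d.Φ d.xbar < d.Φ d.xbar + 1 := lt_add_one _
          _ ≤ Real.log x := hΦlog
          _ ≤ φ x - α * Real.log x := by linarith [hφ1']
          _ ≤ Real.log (g x / f x) := hLlb
      calc d.ybar = Real.exp (d.Φ d.xbar) := rfl
        _ < Real.exp (Real.log (g x / f x)) := Real.exp_lt_exp.2 h7
        _ = g x / f x := Real.exp_log hy0
    have hxs : 0 < x ^ s := Real.rpow_pos_of_pos hx0 _
    have hΨlb : c₂ * x ^ s ≤ d.Ψ (Real.log (g x / f x)) := by
      have h8 : c₂ * x ^ s ≤ d.Ψ (φ x - α * Real.log x) := (le_div_iff₀ hxs).1 hΨx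
      exact h8.trans (d.psi_mono hkey1 hLlb)
    have hΨ0 : 0 < c₂ * x ^ s := mul_pos hc₂ hxs
    have hΨθ : c₂ ^ θ * x ^ (s * θ) ≤ d.Ψ (Real.log (g x / f x)) ^ θ := by
      have h9 : (c₂ * x ^ s) ^ θ ≤ d.Ψ (Real.log (g x / f x)) ^ θ :=
        Real.rpow_le_rpow hΨ0.le hΨlb hθ0.le
      rwa [Real.mul_rpow hc₂.le (Real.rpow_nonneg hx0.le s), ← Real.rpow_mul hx0.le] at h9
    have hFeq : d.FPhi θ (g x / f x)
        = d.aconst θ * (g x / f x) * d.Ψ (Real.log (g x / f x)) ^ θ + d.bconst θ := by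
      simp only [ClassIIData.FPhi]
      rw [if_neg (not_le.2 hybar)]
    have hyf : g x / f x * f x = g x := div_mul_cancel₀ _ hfpos.ne'
    have hxe : x ^ (s * θ) = x ^ (δ - 1) * x ^ (t + 1) := by
      rw [← Real.rpow_add hx0]
      congr 1
      rw [hδ]; ring
    have hmain1 : C * x ^ (δ - 1)
        ≤ d.aconst θ * (g x / f x) * d.Ψ (Real.log (g x / f x)) ^ θ * f x := by
      have h2 : d.aconst θ * (g x / f x) * d.Ψ (Real.log (g x / f x)) ^ θ * f x
          = d.aconst θ * g x * d.Ψ (Real.log (g x / f x)) ^ θ := by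
        rw [show d.aconst θ * (g x / f x) * d.Ψ (Real.log (g x / f x)) ^ θ * f x
            = d.aconst θ * (g x / f x * f x) * d.Ψ (Real.log (g x / f x)) ^ θ from by ring,
          hyf]
      rw [h2]
      have h3 : d.aconst θ * (c₁ / x ^ (t + 1)) * (c₂ ^ θ * x ^ (s * θ))
          ≤ d.aconst θ * g x * d.Ψ (Real.log (g x / f x)) ^ θ :=
        mul_le_mul (mul_le_mul_of_nonneg_left hgx' hA.le) hΨθ
          (by positivity) (mul_nonneg hA.le hgpos.le)
      have heq : d.aconst θ * (c₁ / x ^ (t + 1)) * (c₂ ^ θ * x ^ (s * θ))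
          = C * x ^ (δ - 1) := by
        rw [hxe, hC']
        field_simp
      linarith [h3, heq.ge, heq.le]
    have hbterm : -(C / 2 * x ^ (δ - 1)) ≤ d.bconst θ * f x := by
      have h1 : -|d.bconst θ| * f x ≤ d.bconst θ * f x :=
        mul_le_mul_of_nonneg_right (neg_abs_le _) hfpos.le
      rw [neg_mul] at h1
      have h2 : |d.bconst θ| * f x ≤ C / 2 * x ^ (δ - 1) := by rw [hfx]; exact hbx
      linarith
    calc C / 2 * x ^ (δ - 1)
        = C * x ^ (δ - 1) + -(C / 2 * x ^ (δ - 1)) := by ring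
      _ ≤ d.aconst θ * (g x / f x) * d.Ψ (Real.log (g x / f x)) ^ θ * f x
          + d.bconst θ * f x := add_le_add hmain1 hbterm
      _ = d.FPhi θ (g x / f x) * f x := by rw [hFeq]; ring
  obtain ⟨X, hX⟩ := eventually_atTop.1 hmain
  have hX'pos : (0:ℝ) < max X 1 := lt_of_lt_of_le one_pos (le_max_right _ _)
  have key : ∫⁻ x in Set.Ioi (max X 1), ENNReal.ofReal (C / 2 * x ^ (δ - 1)) = ⊤ := by
    have hof : ∀ x : ℝ, ENNReal.ofReal (C / 2 * x ^ (δ - 1))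
        = ENNReal.ofReal (C / 2) * ENNReal.ofReal (x ^ (δ - 1)) :=
      fun x => ENNReal.ofReal_mul (half_pos hC).le
    simp_rw [hof]
    rw [lintegral_const_mul' _ _ ENNReal.ofReal_ne_top,
      lintegral_rpow_Ioi_eq_top hX'pos (by linarith : (-1:ℝ) < δ - 1),
      ENNReal.mul_top (ENNReal.ofReal_pos.2 (half_pos hC)).ne']
  have hle : (⊤ : ℝ≥0∞) ≤ Ddiv (d.FPhi θ) f g := by
    rw [← key, Ddiv]
    calc ∫⁻ x in Set.Ioi (max X 1), ENNReal.ofReal (C / 2 * x ^ (δ - 1))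
        ≤ ∫⁻ x in Set.Ioi (max X 1), ENNReal.ofReal (d.FPhi θ (g x / f x) * f x) := by
          refine lintegral_mono_ae ((ae_restrict_iff' measurableSet_Ioi).2 (ae_of_all _ ?_))
          intro x hx
          exact ENNReal.ofReal_le_ofReal (hX x (le_trans (le_max_left _ _) (le_of_lt hx)))
      _ ≤ ∫⁻ x in Set.Ioi (0:ℝ), ENNReal.ofReal (d.FPhi θ (g x / f x) * f x) :=
          lintegral_mono' (Measure.restrict_mono (Set.Ioi_subset_Ioi hX'pos.le) le_rfl) le_rfl
  exact top_le_iff.1 hle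
end
end
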